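/- arXiv:0912.4670 — 2 statements merged into one kernel-verified Lean document; each statement's English description precedes it below -/
import Mathlib

section
/- The unique r in (0,1) satisfying 3/(4r(2+r)) = 1 is r = √7/2 - 1, and for this r, r^3(2+r)/(1+2r) = (7√7 - 17)/32. -/
theorem stmt_9 :
    (Real.sqrt 7 / 2 - 1 ∈ Set.Ioo (0 : ℝ) 1) ∧
    (3 / (4 * (Real.sqrt 7 / 2 - 1) * (2 + (Real.sqrt 7 / 2 - 1))) = 1) ∧
    (∀ r ∈ Set.Ioo (0 : ℝ) 1, 3 / (4 * r * (2 + r)) = 1 → r = Real.sqrt 7 / 2 - 1) ∧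
    ((Real.sqrt 7 / 2 - 1) ^ 3 * (2 + (Real.sqrt 7 / 2 - 1)) /
        (1 + 2 * (Real.sqrt 7 / 2 - 1)) = (7 * Real.sqrt 7 - 17) / 32) := by
  have hs : Real.sqrt 7 ^ 2 = 7 := Real.sq_sqrt (by norm_num)
  have hlb : (2.6 : ℝ) < Real.sqrt 7 := by
    nlinarith [Real.sqrt_nonneg 7]
  have hub : Real.sqrt 7 < 2.7 := by
    nlinarith [Real.sqrt_nonneg 7]
  refine ⟨⟨by linarith, by linarith⟩, ?_, ?_, ?_⟩
  · have h : 4 * (Real.sqrt 7 / 2 - 1) * (2 + (Real.sqrt 7 / 2 - 1)) = 3 := by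
      nlinarith
    rw [h]; norm_num
  · rintro r ⟨hr0, hr1⟩ heq
    have hd : 4 * r * (2 + r) ≠ 0 := by positivity
    have h : 4 * r ^ 2 + 8 * r - 3 = 0 := by
      field_simp at heq; nlinarith
    have hfac : (r - (Real.sqrt 7 / 2 - 1)) * (4 * (r + (Real.sqrt 7 / 2 + 1))) = 0 := by
      nlinarith
    have hpos : 4 * (r + (Real.sqrt 7 / 2 + 1)) > 0 := by linarith
    have := mul_eq_zero.mp hfac
    rcases this with h1 | h2
    · linarith [sub_eq_zero.mp h1]
    · linarith
  · have hd : 1 + 2 * (Real.sqrt 7 / 2 - 1) ≠ 0 := by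
      intro h; nlinarith
    rw [div_eq_div_iff (by nlinarith) (by norm_num : (32:ℝ) ≠ 0)]
    nlinarith [hs, Real.sqrt_nonneg 7]
end

section
/- Let ρ(r) = r^3(2+r)/(1+2r) and η_2(r) = 4/((1+2r)(2+r)^2). Then -d^2 log ρ(r)/(d log η_2(r))^2 = (2+r)(1+2r)/(6r^2(1+r)) for all r > 0, and in particular this quantity is strictly positive. -/
/-!
Both logarithmic derivatives are rational: `(log ρ)' = 6(1+r)²/(r(2+r)(1+2r))` and
`(log η₂)' = -6(1+r)/((1+2r)(2+r))`, so `d log ρ / d log η₂ = -(1+r)/r`. Its `r`-derivative is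
`1/r²`, and dividing once more by `(log η₂)'` gives `(2+r)(1+2r)/(6r²(1+r))`.
-/

open Real Filter Topology

lemma hasDerivAt_log_rho {x : ℝ} (hx : 0 < x) :
    HasDerivAt (fun y => log (y ^ 3 * (2 + y) / (1 + 2 * y)))
      (6 * (1 + x) ^ 2 / (x * (2 + x) * (1 + 2 * x))) x := by
  have hnum := (hasDerivAt_pow 3 x).fun_mul ((hasDerivAt_id' x).const_add 2)
  have hden := ((hasDerivAt_id' x).const_mul 2).const_add 1
  refine ((hnum.fun_div hden (by positivity)).log (by positivity)).congr_deriv ?_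
  field_simp
  ring

lemma hasDerivAt_log_eta {x : ℝ} (hx : 0 < x) :
    HasDerivAt (fun y => log (4 / ((1 + 2 * y) * (2 + y) ^ 2)))
      (-(6 * (1 + x)) / ((1 + 2 * x) * (2 + x))) x := by
  have hden := (((hasDerivAt_id' x).const_mul 2).const_add 1).fun_mul
    (((hasDerivAt_id' x).const_add 2).fun_pow 2)
  refine (((hasDerivAt_const x 4).fun_div hden (by positivity)).log (by positivity)).congr_deriv ?_
  field_simp
  ring

lemma deriv_log_rho_div_deriv_log_eta {x : ℝ} (hx : 0 < x) :
    deriv (fun y => log (y ^ 3 * (2 + y) / (1 + 2 * y))) x /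
        deriv (fun y => log (4 / ((1 + 2 * y) * (2 + y) ^ 2))) x = -((1 + x) / x) := by
  rw [(hasDerivAt_log_rho hx).deriv, (hasDerivAt_log_eta hx).deriv]
  field_simp

lemma hasDerivAt_neg_one_add_div_self {x : ℝ} (hx : x ≠ 0) :
    HasDerivAt (fun y => -((1 + y) / y)) (1 / x ^ 2) x := by
  refine (((hasDerivAt_id' x).const_add 1).fun_div (hasDerivAt_id' x) hx).fun_neg.congr_deriv ?_
  field_simp
  ring

theorem stmt_13 (r : ℝ) (hr : 0 < r) :
    let ρ : ℝ → ℝ := fun r => r ^ 3 * (2 + r) / (1 + 2 * r)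
    let η₂ : ℝ → ℝ := fun r => 4 / ((1 + 2 * r) * (2 + r) ^ 2)
    let lρ : ℝ → ℝ := fun r => Real.log (ρ r)
    let lη : ℝ → ℝ := fun r => Real.log (η₂ r)
    let M : ℝ → ℝ := fun r => deriv lρ r / deriv lη r;
    (-(deriv M r / deriv lη r) = (2 + r) * (1 + 2 * r) / (6 * r ^ 2 * (1 + r)) ∧
      0 < (2 + r) * (1 + 2 * r) / (6 * r ^ 2 * (1 + r))) := by
  intro ρ η₂ lρ lη M
  have hM : M =ᶠ[𝓝 r] fun x => -((1 + x) / x) := by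
    filter_upwards [eventually_gt_nhds hr] with x hx
    exact deriv_log_rho_div_deriv_log_eta hx
  refine ⟨?_, by positivity⟩
  rw [hM.deriv_eq, (hasDerivAt_neg_one_add_div_self hr.ne').deriv, (hasDerivAt_log_eta hr).deriv]
  field_simp
end
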